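/- For |q|<1, the theta function φ(q) = Σ_{n∈ℤ} q^{n²} satisfies φ(q) = (Π_{n≥1}(1-q^{2n}))^5 / ((Π_{n≥1}(1-q^n))^2 · (Π_{n≥1}(1-q^{4n}))^2). -/

import Mathlib

/-!
Gauss's identity `φ(q) = ∏ (1 - q^{2n}) (1 + q^{2n-1})²` is the limit as `N → ∞` of its finite
form `∑_{|j| ≤ N} [2N, N+j]_{q²} q^{j²} = ∏_{n<N} (1 + q^{2n+1})²`. Multiplied by `q^{3N²}`, this
is Rothe's q-binomial theorem `∏_{i<m} (y + x t^i) = ∑_{a+b=m} [m, a]_t t^{a(a-1)/2} x^a y^b` at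
`m = 2N`, `t = q²`, `x = q`, `y = q^{2N}`. The Gaussian binomials `[m, k]_t` are bounded by
`1 / ∏ (1 - |t|^n)`, and `[2N, N+j]_t = (t;t)_{2N} / ((t;t)_{N+j} (t;t)_{N-j}) → 1 / (t;t)_∞`,
so dominated convergence passes to the limit. The eta quotient reduces to Gauss's identity through
`∏ (1 + q^n) = ∏ (1 + q^{2n-1}) ∏ (1 + q^{2n})` and `(1 - x)(1 + x) = 1 - x²`.
-/

open Finset Filter Topology

section GaussianBinomial

variable {R : Type*}

def qBinom [Semiring R] (t : R) : ℕ → ℕ → R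
  | _, 0 => 1
  | 0, _ + 1 => 0
  | m + 1, k + 1 => qBinom t m k + t ^ (k + 1) * qBinom t m (k + 1)

def qPochhammer [CommRing R] (t : R) (n : ℕ) : R := ∏ i ∈ range n, (1 - t ^ (i + 1))

lemma qPochhammer_succ [CommRing R] (t : R) (n : ℕ) :
    qPochhammer t (n + 1) = qPochhammer t n * (1 - t ^ (n + 1)) :=
  prod_range_succ _ _

section Semiring

variable [Semiring R] (t : R)

@[simp] lemma qBinom_zero_right (m : ℕ) : qBinom t m 0 = 1 := by cases m <;> rfl

@[simp] lemma qBinom_zero_succ (k : ℕ) : qBinom t 0 (k + 1) = 0 := rfl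

lemma qBinom_succ_succ (m k : ℕ) :
    qBinom t (m + 1) (k + 1) = qBinom t m k + t ^ (k + 1) * qBinom t m (k + 1) := rfl

lemma qBinom_eq_zero_of_lt : ∀ {m k : ℕ}, m < k → qBinom t m k = 0
  | 0, _ + 1, _ => rfl
  | m + 1, k + 1, h => by
    rw [qBinom_succ_succ, qBinom_eq_zero_of_lt (by omega), qBinom_eq_zero_of_lt (by omega),
      mul_zero, add_zero]

@[simp] lemma qBinom_self : ∀ m : ℕ, qBinom t m m = 1
  | 0 => rfl
  | m + 1 => by
    rw [qBinom_succ_succ, qBinom_self m, qBinom_eq_zero_of_lt t m.lt_succ_self, mul_zero,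
      add_zero]

lemma map_qBinom {S : Type*} [Semiring S] (f : R →+* S) : ∀ m k : ℕ,
    f (qBinom t m k) = qBinom (f t) m k
  | _, 0 => by simp
  | 0, _ + 1 => by simp
  | m + 1, k + 1 => by simp [qBinom_succ_succ, map_qBinom f m]

end Semiring

lemma qBinom_add_mul_qPochhammer [CommRing R] (t : R) : ∀ k l : ℕ,
    qBinom t (k + l) k * qPochhammer t k * qPochhammer t l = qPochhammer t (k + l)
  | k, 0 => by simp [qPochhammer]
  | 0, l + 1 => by simp [qPochhammer]
  | k + 1, l + 1 => by
    have hk : qBinom t (k + l + 1) k * qPochhammer t k * qPochhammer t (l + 1) =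
        qPochhammer t (k + l + 1) := qBinom_add_mul_qPochhammer t k (l + 1)
    have hl := qBinom_add_mul_qPochhammer t (k + 1) l
    rw [show k + 1 + l = k + l + 1 by omega, qPochhammer_succ t k] at hl
    rw [qPochhammer_succ t l] at hk
    rw [show k + 1 + (l + 1) = k + l + 1 + 1 by omega, qBinom_succ_succ,
      qPochhammer_succ _ (k + l + 1), qPochhammer_succ t k, qPochhammer_succ t l]
    linear_combination (1 - t ^ (k + 1)) * hk + t ^ (k + 1) * (1 - t ^ (l + 1)) * hl

lemma prod_add_mul_pow_eq_sum_qBinom [CommSemiring R] (t y : R) (m : ℕ) : ∀ x : R,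
    ∏ i ∈ range m, (y + x * t ^ i) =
      ∑ p ∈ antidiagonal m, qBinom t m p.1 * t ^ p.1.choose 2 * x ^ p.1 * y ^ p.2 := by
  induction m with
  | zero => simp
  | succ m ih =>
    intro x
    set g : ℕ × ℕ → R := fun p => qBinom t m p.1 * t ^ (p.1.choose 2 + p.1) * x ^ p.1 * y ^ p.2
    have hxt : ∏ i ∈ range m, (y + x * t * t ^ i) = ∑ p ∈ antidiagonal m, g p := by
      rw [ih]
      exact sum_congr rfl fun p _ => by simp only [g]; ring
    have hy : ∑ p ∈ antidiagonal (m + 1), g p = y * ∑ p ∈ antidiagonal m, g p := by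
      rw [Nat.sum_antidiagonal_succ', mul_sum]
      simp only [g, qBinom_eq_zero_of_lt t m.lt_succ_self, zero_mul, zero_add]
      exact sum_congr rfl fun p _ => by ring
    have hchoose (a : ℕ) : (a + 1).choose 2 = a.choose 2 + a := by
      rw [Nat.choose_succ_succ', Nat.choose_one_right, add_comm]
    calc ∏ i ∈ range (m + 1), (y + x * t ^ i)
        = (∏ i ∈ range m, (y + x * t * t ^ i)) * (y + x) := by
          simp only [prod_range_succ', pow_succ', pow_zero, mul_one, mul_assoc]
      _ = ∑ p ∈ antidiagonal (m + 1), g p + x * ∑ p ∈ antidiagonal m, g p := by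
          rw [hxt, hy]; ring
      _ = _ := by
          rw [Nat.sum_antidiagonal_succ, Nat.sum_antidiagonal_succ, mul_sum, add_assoc,
            ← sum_add_distrib]
          congr 1
          · simp [g]
          · refine sum_congr rfl fun p _ => ?_
            simp only [g, qBinom_succ_succ, hchoose]
            ring

end GaussianBinomial

section FiniteJacobi

variable {R : Type*} [CommSemiring R]

lemma prod_pow_two_mul_add_one (q : R) (N : ℕ) :
    ∏ i ∈ range N, q ^ (2 * i + 1) = q ^ (N ^ 2) := by
  induction N with
  | zero => simp
  | succ N ih => rw [prod_range_succ, ih, ← pow_add]; ring_nf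

lemma prod_pow_add_mul_sq_pow (q : R) (N : ℕ) :
    ∏ i ∈ range (2 * N), (q ^ (2 * N) + q * (q ^ 2) ^ i) =
      q ^ (3 * N ^ 2) * (∏ i ∈ range N, (1 + q ^ (2 * i + 1))) ^ 2 := by
  have hlow : ∏ i ∈ range N, (q ^ (2 * N) + q * (q ^ 2) ^ i) =
      q ^ (N ^ 2) * ∏ i ∈ range N, (1 + q ^ (2 * i + 1)) := by
    rw [← prod_pow_two_mul_add_one, ← prod_range_reflect (fun i => 1 + q ^ (2 * i + 1)),
      ← prod_mul_distrib]
    refine prod_congr rfl fun i hi => ?_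
    have hsplit : q ^ (2 * N) = q ^ (2 * i + 1) * q ^ (2 * (N - 1 - i) + 1) := by
      rw [← pow_add]; congr 1; have := mem_range.mp hi; omega
    rw [hsplit]; ring
  have hhigh : ∏ i ∈ range N, (q ^ (2 * N) + q * (q ^ 2) ^ (N + i)) =
      q ^ (2 * N ^ 2) * ∏ i ∈ range N, (1 + q ^ (2 * i + 1)) := by
    rw [show q ^ (2 * N ^ 2) = ∏ _i ∈ range N, q ^ (2 * N) by
      rw [prod_const, card_range, ← pow_mul]; ring_nf, ← prod_mul_distrib]
    exact prod_congr rfl fun i _ => by ring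
  rw [two_mul, prod_range_add, ← two_mul, hlow, hhigh]
  ring

lemma two_mul_choose_two_add_self (a : ℕ) : 2 * a.choose 2 + a = a ^ 2 := by
  rw [Nat.choose_two_right, Nat.mul_div_cancel' (Nat.even_mul_pred_self a).two_dvd]
  cases a <;> simp; ring

lemma sum_antidiagonal_qBinom_eq (q : R) (N : ℕ) :
    ∑ p ∈ antidiagonal (2 * N),
        qBinom (q ^ 2) (2 * N) p.1 * (q ^ 2) ^ p.1.choose 2 * q ^ p.1 * (q ^ (2 * N)) ^ p.2 =
      q ^ (3 * N ^ 2) *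
        ∑ j ∈ Icc (-N : ℤ) N, qBinom (q ^ 2) (2 * N) (N + j).toNat * q ^ (j.natAbs ^ 2) := by
  rw [mul_sum]
  refine sum_nbij' (fun p => (p.1 : ℤ) - N) (fun j => ((N + j).toNat, (N - j).toNat))
    (fun p hp => ?_) (fun j hj => ?_) (fun p hp => ?_) (fun j hj => ?_) (fun p hp => ?_)
  all_goals simp only [HasAntidiagonal.mem_antidiagonal, mem_Icc, Prod.ext_iff] at *
  · omega
  · omega
  · omega
  · omega
  have hexp : 2 * p.1.choose 2 + (p.1 + 2 * N * p.2) =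
      3 * N ^ 2 + ((p.1 : ℤ) - N).natAbs ^ 2 := by
    have hchoose := two_mul_choose_two_add_self p.1
    have hb : p.2 = 2 * N - p.1 := by omega
    zify [show p.1 ≤ 2 * N by omega] at hchoose hb ⊢
    rw [sq_abs, hb]
    linear_combination hchoose
  have hpow : (q ^ 2) ^ p.1.choose 2 * (q ^ p.1 * (q ^ (2 * N)) ^ p.2) =
      q ^ (3 * N ^ 2) * q ^ ((p.1 : ℤ) - N).natAbs ^ 2 := by
    rw [← pow_mul, ← pow_mul, ← pow_add, ← pow_add, ← pow_add, hexp]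
  rw [show (N + ((p.1 : ℤ) - N)).toNat = p.1 by omega]
  simp only [mul_assoc, hpow, mul_left_comm]

lemma pow_mul_sum_qBinom_mul_pow_sq (q : R) (N : ℕ) :
    q ^ (3 * N ^ 2) *
        ∑ j ∈ Icc (-N : ℤ) N, qBinom (q ^ 2) (2 * N) (N + j).toNat * q ^ (j.natAbs ^ 2) =
      q ^ (3 * N ^ 2) * (∏ i ∈ range N, (1 + q ^ (2 * i + 1))) ^ 2 := by
  rw [← sum_antidiagonal_qBinom_eq, ← prod_pow_add_mul_sq_pow, prod_add_mul_pow_eq_sum_qBinom]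

open Polynomial in
theorem sum_qBinom_mul_pow_sq (q : R) (N : ℕ) :
    ∑ j ∈ Icc (-N : ℤ) N, qBinom (q ^ 2) (2 * N) (N + j).toNat * q ^ (j.natAbs ^ 2) =
      (∏ i ∈ range N, (1 + q ^ (2 * i + 1))) ^ 2 := by
  -- `q ^ (3 * N ^ 2)` need not be cancellable in `R`, but `X ^ (3 * N ^ 2)` is in `ℕ[X]`.
  have hX := mul_left_cancel₀ (pow_ne_zero _ X_ne_zero)
    (pow_mul_sum_qBinom_mul_pow_sq (X : ℕ[X]) N)
  have := congrArg (eval₂RingHom (Nat.castRingHom R) q) hX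
  simp only [map_sum, map_mul, map_pow, map_prod, map_add, map_one, map_qBinom] at this
  simpa using this

end FiniteJacobi

section InfiniteProducts

variable {R : Type*} [NormedCommRing R] [NormOneClass R] {x : R}

lemma summable_norm_pow_of_le (hx : ‖x‖ < 1) {e : ℕ → ℕ} (he : ∀ n, n ≤ e n) :
    Summable fun n => ‖x ^ e n‖ :=
  (summable_geometric_of_lt_one (norm_nonneg x) hx).of_nonneg_of_le (fun _ => norm_nonneg _)
    fun n => (norm_pow_le x (e n)).trans (pow_le_pow_of_le_one (norm_nonneg x) hx.le (he n))

lemma one_sub_pow_succ_ne_zero [NormMulClass R] (hx : ‖x‖ < 1) (n : ℕ) : 1 - x ^ (n + 1) ≠ 0 := by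
  rw [sub_ne_zero]
  intro h
  have := congrArg norm h
  rw [norm_one, norm_pow] at this
  exact (pow_lt_one₀ (norm_nonneg x) hx n.succ_ne_zero).ne this.symm

variable [CompleteSpace R]

lemma multipliable_one_add_pow_of_le (hx : ‖x‖ < 1) {e : ℕ → ℕ} (he : ∀ n, n ≤ e n) :
    Multipliable fun n => 1 + x ^ e n :=
  multipliable_one_add_of_summable (summable_norm_pow_of_le hx he)

lemma multipliable_one_sub_pow_of_le (hx : ‖x‖ < 1) {e : ℕ → ℕ} (he : ∀ n, n ≤ e n) :
    Multipliable fun n => 1 - x ^ e n := by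
  simpa only [sub_eq_add_neg] using
    multipliable_one_add_of_summable (f := fun n => -x ^ e n) (by
      simpa only [norm_neg] using summable_norm_pow_of_le hx he)

lemma tendsto_qPochhammer (hx : ‖x‖ < 1) :
    Tendsto (qPochhammer x) atTop (𝓝 (∏' n, (1 - x ^ (n + 1)))) :=
  (multipliable_one_sub_pow_of_le hx fun n => n.le_add_right 1).hasProd.tendsto_prod_nat

lemma tprod_one_sub_pow_mul_tprod_one_add_pow (hx : ‖x‖ < 1) :
    (∏' n, (1 - x ^ (n + 1))) * ∏' n, (1 + x ^ (n + 1)) = ∏' n, (1 - (x ^ 2) ^ (n + 1)) := by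
  rw [← (multipliable_one_sub_pow_of_le hx fun n => n.le_add_right 1).tprod_mul
    (multipliable_one_add_pow_of_le hx fun n => n.le_add_right 1)]
  exact tprod_congr fun n => by ring

lemma tprod_one_add_pow_odd_mul_tprod_one_add_pow_sq (hx : ‖x‖ < 1) :
    (∏' n, (1 + x ^ (2 * n + 1))) * ∏' n, (1 + (x ^ 2) ^ (n + 1)) = ∏' n, (1 + x ^ (n + 1)) := by
  have heven : (fun n => 1 + (x ^ 2) ^ (n + 1)) = fun n => 1 + x ^ ((2 * n + 1) + 1) := by
    ext n; ring
  rw [heven]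
  exact tprod_even_mul_odd (f := fun n => 1 + x ^ (n + 1))
    (multipliable_one_add_pow_of_le hx fun n => by omega)
    (multipliable_one_add_pow_of_le hx fun n => by omega)

lemma tprod_one_sub_pow_ne_zero [NormMulClass R] (hx : ‖x‖ < 1) :
    ∏' n, (1 - x ^ (n + 1)) ≠ 0 := by
  simpa only [sub_eq_add_neg] using
    tprod_one_add_ne_zero_of_summable (f := fun n => -x ^ (n + 1))
      (fun n => by simpa only [sub_eq_add_neg] using one_sub_pow_succ_ne_zero hx n)
      (by simpa only [norm_neg] using summable_norm_pow_of_le hx fun n => n.le_add_right 1)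

end InfiniteProducts

section GaussianBinomialLimits

lemma qPochhammer_pos {r : ℝ} (hr0 : 0 ≤ r) (hr1 : r < 1) (n : ℕ) : 0 < qPochhammer r n :=
  prod_pos fun i _ => sub_pos.mpr (pow_lt_one₀ hr0 hr1 i.succ_ne_zero)

lemma tprod_one_sub_pow_le_qPochhammer {r : ℝ} (hr0 : 0 ≤ r) (hr1 : r < 1) (n : ℕ) :
    ∏' i, (1 - r ^ (i + 1)) ≤ qPochhammer r n := by
  refine Antitone.le_of_tendsto (antitone_nat_of_succ_le fun k => ?_)
    (tendsto_qPochhammer (by rwa [Real.norm_of_nonneg hr0])) n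
  rw [qPochhammer_succ]
  exact mul_le_of_le_one_right (qPochhammer_pos hr0 hr1 k).le (sub_le_self _ (by positivity))

lemma tprod_one_sub_pow_pos {r : ℝ} (hr0 : 0 ≤ r) (hr1 : r < 1) :
    0 < ∏' i, (1 - r ^ (i + 1)) :=
  (tprod_nonneg fun i => sub_nonneg.mpr (pow_le_one₀ hr0 hr1.le)).lt_of_ne'
    (tprod_one_sub_pow_ne_zero (by rwa [Real.norm_of_nonneg hr0]))

variable {R : Type*} [NormedRing R] [NormOneClass R] {t : R}

lemma norm_qBinom_le (ht : ‖t‖ < 1) : ∀ m k, ‖qBinom t m k‖ ≤ (qPochhammer ‖t‖ k)⁻¹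
  | _, 0 => by simp [qPochhammer]
  | 0, k + 1 => by simpa using (qPochhammer_pos (norm_nonneg t) ht (k + 1)).le
  | m + 1, k + 1 => by
    have hP := qPochhammer_pos (norm_nonneg t) ht k
    have hfac : 0 < 1 - ‖t‖ ^ (k + 1) :=
      sub_pos.mpr (pow_lt_one₀ (norm_nonneg t) ht k.succ_ne_zero)
    calc ‖qBinom t (m + 1) (k + 1)‖
        ≤ ‖qBinom t m k‖ + ‖t‖ ^ (k + 1) * ‖qBinom t m (k + 1)‖ := by
          rw [qBinom_succ_succ]
          refine (norm_add_le _ _).trans (add_le_add le_rfl ((norm_mul_le _ _).trans ?_))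
          exact mul_le_mul_of_nonneg_right (norm_pow_le t _) (norm_nonneg _)
      _ ≤ (qPochhammer ‖t‖ k)⁻¹ + ‖t‖ ^ (k + 1) * (qPochhammer ‖t‖ (k + 1))⁻¹ := by
          gcongr
          · exact norm_qBinom_le ht m k
          · exact norm_qBinom_le ht m (k + 1)
      _ = (qPochhammer ‖t‖ (k + 1))⁻¹ := by
          rw [qPochhammer_succ]
          field_simp
          ring

lemma norm_qBinom_le_tprod (ht : ‖t‖ < 1) (m k : ℕ) :
    ‖qBinom t m k‖ ≤ (∏' n, (1 - ‖t‖ ^ (n + 1)))⁻¹ :=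
  (norm_qBinom_le ht m k).trans <| inv_anti₀ (tprod_one_sub_pow_pos (norm_nonneg t) ht)
    (tprod_one_sub_pow_le_qPochhammer (norm_nonneg t) ht k)

variable {𝕜 : Type*} [NormedField 𝕜]

lemma qPochhammer_ne_zero {t : 𝕜} (ht : ‖t‖ < 1) (n : ℕ) : qPochhammer t n ≠ 0 :=
  prod_ne_zero_iff.mpr fun i _ => one_sub_pow_succ_ne_zero ht i

lemma tendsto_toNat_add_atTop (j : ℤ) : Tendsto (fun N : ℕ => ((N : ℤ) + j).toNat) atTop atTop :=
  tendsto_atTop_mono (fun N => show N - j.natAbs ≤ ((N : ℤ) + j).toNat by omega)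
    (tendsto_sub_atTop_nat j.natAbs)

lemma tendsto_qBinom_two_mul [CompleteSpace 𝕜] {t : 𝕜} (ht : ‖t‖ < 1) (j : ℤ) :
    Tendsto (fun N : ℕ => qBinom t (2 * N) ((N : ℤ) + j).toNat) atTop
      (𝓝 (∏' n, (1 - t ^ (n + 1)))⁻¹) := by
  have hP := tprod_one_sub_pow_ne_zero ht
  have hclosed (N : ℕ) (hN : j.natAbs ≤ N) : qBinom t (2 * N) ((N : ℤ) + j).toNat =
      qPochhammer t (2 * N) /
        (qPochhammer t ((N : ℤ) + j).toNat * qPochhammer t ((N : ℤ) - j).toNat) := by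
    have h := qBinom_add_mul_qPochhammer t ((N : ℤ) + j).toNat ((N : ℤ) - j).toNat
    rw [show ((N : ℤ) + j).toNat + ((N : ℤ) - j).toNat = 2 * N by omega] at h
    rw [eq_div_iff (mul_ne_zero (qPochhammer_ne_zero ht _) (qPochhammer_ne_zero ht _)), ← h]
    ring
  have hlim := ((tendsto_qPochhammer ht).comp (tendsto_id.const_mul_atTop' two_pos)).div
    (((tendsto_qPochhammer ht).comp (tendsto_toNat_add_atTop j)).mul
      ((tendsto_qPochhammer ht).comp (tendsto_toNat_add_atTop (-j)))) (mul_ne_zero hP hP)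
  rw [div_mul_cancel_left₀ hP] at hlim
  refine hlim.congr' (eventually_atTop.mpr ⟨j.natAbs, fun N hN => ?_⟩)
  simp only [hclosed N hN, ← sub_eq_add_neg]
  rfl

end GaussianBinomialLimits

theorem tsum_pow_natAbs_sq_eq_tprod {𝕜 : Type*} [NormedField 𝕜] [CompleteSpace 𝕜] {q : 𝕜}
    (hq : ‖q‖ < 1) :
    ∑' n : ℤ, q ^ (n.natAbs ^ 2) =
      (∏' n, (1 - (q ^ 2) ^ (n + 1))) * (∏' n, (1 + q ^ (2 * n + 1))) ^ 2 := by
  have hq2 : ‖q ^ 2‖ < 1 := by simpa using pow_lt_one₀ (norm_nonneg q) hq two_ne_zero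
  set C := (∏' n, (1 - ‖q ^ 2‖ ^ (n + 1)))⁻¹
  have hC : 0 ≤ C := inv_nonneg.mpr (tprod_one_sub_pow_pos (norm_nonneg _) hq2).le
  let f : ℕ → ℤ → 𝕜 := fun N j =>
    if j.natAbs ≤ N then qBinom (q ^ 2) (2 * N) ((N : ℤ) + j).toNat * q ^ (j.natAbs ^ 2) else 0
  have hfinite (N : ℕ) : ∑' j, f N j = (∏ i ∈ range N, (1 + q ^ (2 * i + 1))) ^ 2 := by
    rw [tsum_eq_sum (s := Icc (-N : ℤ) N) fun j hj => if_neg (by simp only [mem_Icc] at hj; omega),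
      ← sum_qBinom_mul_pow_sq]
    exact sum_congr rfl fun j hj => if_pos (by simp only [mem_Icc] at hj; omega)
  have hbound (N : ℕ) (j : ℤ) : ‖f N j‖ ≤ C * ‖q‖ ^ j.natAbs := by
    simp only [f]
    split_ifs
    · rw [norm_mul, norm_pow]
      exact mul_le_mul (norm_qBinom_le_tprod hq2 _ _)
        (pow_le_pow_of_le_one (norm_nonneg q) hq.le (Nat.le_self_pow two_ne_zero _))
        (by positivity) hC
    · rw [norm_zero]; positivity
  have hsummable : Summable fun j : ℤ => C * ‖q‖ ^ j.natAbs := by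
    have hgeom := (summable_geometric_of_lt_one (norm_nonneg q) hq).mul_left C
    exact .of_nat_of_neg (by simpa using hgeom) (by simpa using hgeom)
  have hpointwise (j : ℤ) : Tendsto (f · j) atTop
      (𝓝 ((∏' n, (1 - (q ^ 2) ^ (n + 1)))⁻¹ * q ^ (j.natAbs ^ 2))) :=
    ((tendsto_qBinom_two_mul hq2 j).mul_const _).congr'
      (eventually_atTop.mpr ⟨j.natAbs, fun N hN => (if_pos hN).symm⟩)
  have hlim := tendsto_tsum_of_dominated_convergence hsummable hpointwise (.of_forall hbound)
  simp only [hfinite, tsum_mul_left] at hlim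
  have hprod := ((multipliable_one_add_pow_of_le (e := fun n => 2 * n + 1) hq
    fun n => by omega).hasProd.tendsto_prod_nat).pow 2
  rw [tendsto_nhds_unique hprod hlim, mul_inv_cancel_left₀ (tprod_one_sub_pow_ne_zero hq2)]

/-- Jacobi's triple product identity in eta-quotient form:
`φ(q) = Π(1-q^{2n})^5 / (Π(1-q^n)^2 · Π(1-q^{4n})^2)` for `|q| < 1`. -/
theorem phi_eq_eta_quotient (q : ℂ) (hq : ‖q‖ < 1) :
    (∑' n : ℤ, q ^ (n.natAbs ^ 2)) =
      (∏' n : ℕ, (1 - q ^ (2 * (n + 1)))) ^ 5 /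
        ((∏' n : ℕ, (1 - q ^ (n + 1))) ^ 2 *
          (∏' n : ℕ, (1 - q ^ (4 * (n + 1)))) ^ 2) := by
  have hq2 : ‖q ^ 2‖ < 1 := by simpa using pow_lt_one₀ (norm_nonneg q) hq two_ne_zero
  have hq4 : ‖(q ^ 2) ^ 2‖ < 1 := by simpa using pow_lt_one₀ (norm_nonneg _) hq2 two_ne_zero
  have h2 : ∏' n : ℕ, (1 - q ^ (2 * (n + 1))) = ∏' n : ℕ, (1 - (q ^ 2) ^ (n + 1)) := by
    simp only [pow_mul]
  have h4 : ∏' n : ℕ, (1 - q ^ (4 * (n + 1))) = ∏' n : ℕ, (1 - ((q ^ 2) ^ 2) ^ (n + 1)) := by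
    simp only [← pow_mul]
  rw [h2, h4, tsum_pow_natAbs_sq_eq_tprod hq,
    eq_div_iff (by simp [tprod_one_sub_pow_ne_zero hq, tprod_one_sub_pow_ne_zero hq4])]
  set E1 := ∏' n : ℕ, (1 - q ^ (n + 1))
  set E2 := ∏' n : ℕ, (1 - (q ^ 2) ^ (n + 1))
  set E4 := ∏' n : ℕ, (1 - ((q ^ 2) ^ 2) ^ (n + 1))
  set O := ∏' n : ℕ, (1 + q ^ (2 * n + 1))
  have heta : E1 * E4 * O = E2 ^ 2 := by
    linear_combination (-(E1 * O)) * tprod_one_sub_pow_mul_tprod_one_add_pow hq2 +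
      E1 * E2 * tprod_one_add_pow_odd_mul_tprod_one_add_pow_sq hq +
      E2 * tprod_one_sub_pow_mul_tprod_one_add_pow hq
  linear_combination E2 * (E1 * E4 * O + E2 ^ 2) * heta
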